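/- Let TS be a semantic labeled transition system with total transition relation, and fix a k-safety specification φ̂ given by ψ, (ξ i), φ. Then there exists D : Schedule → (Fin k → S) → Prop satisfying (KD1) ∀ s̄, (∀ i, s̄ i ∈ Init) → ψ s̄ → ∃ M, ¬ D M s̄; (KD2) ∀ M s̄, Bad s̄ → D M s̄; (KD3) ∀ M s̄, ¬(M is valid for s̄) → D M s̄; (KD4) ∀ M s̄ s̄' ℓ̄, (∀ M', D M' s̄') → s̄ ↝[M,ℓ̄] s̄' → D M s̄, if and only if TS ⊨ φ̂. -/

import Mathlib

/-- A semantic labeled transition system with a total transition relation. -/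
structure LTS (S L : Type*) where
  Init : Set S
  Tr : S → L → S → Prop
  total : ∀ s, ∃ ℓ s', Tr s ℓ s'

/-- `t` is a trace of `T` starting from `s`. -/
def LTS.IsTrace {S L : Type*} (T : LTS S L) (t : ℕ → S) (s : S) : Prop :=
  t 0 = s ∧ ∀ n, ∃ ℓ, T.Tr (t n) ℓ (t (n + 1))

/-- The trace `t` has at least `j + 1` observation points with respect to `ξ`. -/
def HasObsUpTo {S : Type*} (ξ : S → Prop) (t : ℕ → S) (j : ℕ) : Prop :=
  ∃ f : Fin (j + 1) → ℕ, StrictMono f ∧ ∀ i, ξ (t (f i))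

/-- The `j`-th observation state of the trace `t` with respect to `ξ`:
`t n_j` where `n_j` is the `j`-th smallest element of `{n | ξ (t n)}`. -/
noncomputable def obsState {S : Type*} (ξ : S → Prop) (t : ℕ → S) (j : ℕ) : S :=
  t (Nat.nth (fun n => ξ (t n)) j)

/-- `TS ⊨ φ̂` for the `k`-safety specification given by `ψ`, `ξ`, `φ`. -/
def kSafetyModels {S L : Type*} (T : LTS S L) {k : ℕ} (ψ : (Fin k → S) → Prop)
    (ξ : Fin k → S → Prop) (φ : (Fin k → S) → Prop) : Prop :=
  ∀ sb : Fin k → S, (∀ i, sb i ∈ T.Init) → ψ sb →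
    ∀ t : Fin k → ℕ → S, (∀ i, T.IsTrace (t i) (sb i)) →
      ∀ j : ℕ, (∀ i, HasObsUpTo (ξ i) (t i) j) →
        φ (fun i => obsState (ξ i) (t i) j)

/-- `s̄ ↝[M,ℓ̄] s̄'`: the composed step with schedule `M` and labels `ℓ̄`. -/
def ComposedStep {S L : Type*} (T : LTS S L) {k : ℕ} (M : Set (Fin k)) (ℓ : Fin k → L)
    (sb sb' : Fin k → S) : Prop :=
  (∀ i ∈ M, T.Tr (sb i) (ℓ i) (sb' i)) ∧ ∀ i ∉ M, sb' i = sb i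

/-- `M` is a valid schedule for the composed state `s̄`. -/
def ValidSched {S : Type*} {k : ℕ} (ξ : Fin k → S → Prop) (M : Set (Fin k))
    (sb : Fin k → S) : Prop :=
  (∀ i ∈ M, ¬ ξ i (sb i)) ∨ (M = Set.univ ∧ ∀ i, ξ i (sb i))

/-- `Bad s̄`: all traces are at observation points but `φ` fails. -/
def BadState {S : Type*} {k : ℕ} (ξ : Fin k → S → Prop) (φ : (Fin k → S) → Prop)
    (sb : Fin k → S) : Prop :=
  (∀ i, ξ i (sb i)) ∧ ¬ φ sb

/-- A schedule: a nonempty subset of `Fin k`. -/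
def Sched (k : ℕ) := {M : Set (Fin k) // M.Nonempty}

/-!
A solution `D` of the clauses is the same thing as a set `G` of composed states (those with some
`M` and `¬ D M s̄`) containing the initial states, free of `Bad` states, and in which some valid
schedule keeps every successor in `G`. If `TS ⊨ φ̂`, the states from which no `Bad` state is
reachable by valid composed steps form such a set: a reachable `Bad` state lifts to traces whose
observation counts are synchronized, so it is a tuple of `j`-th observation states violating `φ`.
Conversely, given such a `G`, any family of traces can be followed inside `G` by composed steps:
valid schedules only move components that are not at an observation point until all of them are,
and then move all of them at once, so the tuples of `j`-th observation states all lie in `G`.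
-/

open Relation

namespace LTS

variable {S L : Type*}

theorem exists_isTrace (T : LTS S L) (s : S) : ∃ t, T.IsTrace t s := by
  choose ℓ next h using T.total
  refine ⟨fun n => next^[n] s, rfl, fun n => ⟨ℓ (next^[n] s), ?_⟩⟩
  simpa only [Function.iterate_succ_apply'] using h _

theorem IsTrace.splice {T : LTS S L} {t : ℕ → S} {s s' : S} {ℓ : L} {p : ℕ}
    (ht : T.IsTrace t s) (hstep : T.Tr (t p) ℓ s') :
    ∃ u, T.IsTrace u s ∧ (∀ n ≤ p, u n = t n) ∧ u (p + 1) = s' := by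
  obtain ⟨w, hw0, hw⟩ := T.exists_isTrace s'
  refine ⟨fun n => if n ≤ p then t n else w (n - (p + 1)), ⟨by simp [ht.1], fun n => ?_⟩,
    fun n hn => if_pos hn, by simp [hw0]⟩
  rcases lt_trichotomy n p with h | rfl | h
  · simpa [h.le, Nat.succ_le_of_lt h] using ht.2 n
  · simpa [hw0] using ⟨ℓ, hstep⟩
  · simpa [show ¬ n ≤ p by omega, show ¬ n < p by omega,
      show n + 1 - (p + 1) = n - (p + 1) + 1 by omega] using hw (n - (p + 1))

end LTS

section Observation

variable {S : Type*} {ξ : S → Prop} {t : ℕ → S}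

theorem count_congr {p q : ℕ → Prop} [DecidablePred p] [DecidablePred q] {n : ℕ}
    (h : ∀ m < n, p m ↔ q m) :
    Nat.count p n = Nat.count q n :=
  le_antisymm (Nat.count_mono_left fun m hm => (h m hm).1)
    (Nat.count_mono_left fun m hm => (h m hm).2)

theorem hasObsUpTo_iff {j : ℕ} :
    HasObsUpTo ξ t j ↔ ∀ hf : (Set.ofPred fun n => ξ (t n)).Finite, j < hf.toFinset.card := by
  constructor
  · rintro ⟨f, hmono, hobs⟩ hf
    have := Finset.card_le_card_of_injOn f (s := Finset.univ)
      (fun r _ => hf.mem_toFinset.2 (hobs r)) hmono.injective.injOn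
    simpa using this
  · intro h
    refine ⟨fun r => Nat.nth (fun n => ξ (t n)) r, fun r r' hr => Nat.nth_lt_nth' hr ?_,
      fun r => Nat.nth_mem (p := fun n => ξ (t n)) _ ?_⟩ <;>
    exact fun hf => lt_of_le_of_lt (Nat.le_of_lt_succ (Fin.is_lt _)) (h hf)

open Classical in
theorem hasObsUpTo_count {n : ℕ} (hn : ξ (t n)) :
    HasObsUpTo ξ t (Nat.count (fun m => ξ (t m)) n) :=
  hasObsUpTo_iff.2 fun hf => Nat.count_lt_card hf hn

open Classical in
theorem obsState_count {n : ℕ} (hn : ξ (t n)) :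
    obsState ξ t (Nat.count (fun m => ξ (t m)) n) = t n := by
  rw [obsState, Nat.nth_count hn]

variable {p : ℕ → Prop} [DecidablePred p] {c n : ℕ}

theorem le_nth_of_count_eq (hc : ∀ hf : (Set.ofPred p).Finite, c < hf.toFinset.card)
    (hn : Nat.count p n = c) : n ≤ Nat.nth p c := by
  by_contra! h
  have := Nat.count_monotone p (Nat.succ_le_of_lt h)
  rw [Nat.count_nth_succ hc] at this
  omega

theorem eq_nth_of_count_eq (hn : Nat.count p n = c) (hp : p n) : n = Nat.nth p c := by
  rw [← hn, Nat.nth_count hp]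

end Observation

section Encoding

open Classical

variable {S L : Type*} {T : LTS S L} {k : ℕ} {ξ : Fin k → S → Prop} {φ : (Fin k → S) → Prop}

def ValidStep (T : LTS S L) (ξ : Fin k → S → Prop) (a b : Fin k → S) : Prop :=
  ∃ M : Set (Fin k), ValidSched ξ M a ∧ ∃ ℓ, ComposedStep T M ℓ a b

theorem exists_validSched (hk : 1 ≤ k) (sb : Fin k → S) : ∃ M : Sched k, ValidSched ξ M.val sb := by
  by_cases hall : ∀ i, ξ i (sb i)
  · exact ⟨⟨Set.univ, ⟨⟨0, hk⟩, trivial⟩⟩, Or.inr ⟨rfl, hall⟩⟩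
  · obtain ⟨i, hi⟩ := not_forall.1 hall
    exact ⟨⟨{i}, Set.singleton_nonempty i⟩, Or.inl fun i' hi' => hi' ▸ hi⟩

theorem composedStep_of_traces {t : Fin k → ℕ → S}
    (ht : ∀ i n, ∃ ℓ, T.Tr (t i n) ℓ (t i (n + 1))) {M : Set (Fin k)} {nb nb' : Fin k → ℕ}
    (hmove : ∀ i ∈ M, nb' i = nb i + 1) (hstay : ∀ i ∉ M, nb' i = nb i) :
    ∃ ℓ, ComposedStep T M ℓ (fun i => t i (nb i)) (fun i => t i (nb' i)) := by
  choose ℓ hℓ using ht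
  exact ⟨fun i => ℓ i (nb i), fun i hi => by simpa only [hmove i hi] using hℓ i (nb i),
    fun i hi => by simp only [hstay i hi]⟩

theorem exists_synchronized_traces {a b : Fin k → S} (h : ReflTransGen (ValidStep T ξ) a b) :
    ∃ (t : Fin k → ℕ → S) (pos : Fin k → ℕ) (c : ℕ), (∀ i, T.IsTrace (t i) (a i)) ∧
      (∀ i, t i (pos i) = b i) ∧ ∀ i, Nat.count (fun n => ξ i (t i n)) (pos i) = c := by
  induction h with
  | refl =>
    choose t ht using fun i => T.exists_isTrace (a i)
    exact ⟨t, 0, 0, ht, fun i => (ht i).1, fun i => Nat.count_zero _⟩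
  | @tail b b' _ hstep ih =>
    obtain ⟨t, pos, c, ht, hpos, hcount⟩ := ih
    obtain ⟨N, hN, ℓ, hmove, hstay⟩ := hstep
    have extend : ∀ i ∈ N, ∃ u, T.IsTrace u (a i) ∧ u (pos i + 1) = b' i ∧
        Nat.count (fun n => ξ i (u n)) (pos i + 1) = c + if ξ i (b i) then 1 else 0 := by
      intro i hi
      obtain ⟨u, hu, hagree, hlast⟩ := (ht i).splice ((hpos i).symm ▸ hmove i hi)
      refine ⟨u, hu, hlast, ?_⟩
      rw [count_congr fun m hm => by rw [hagree m (Nat.le_of_lt_succ hm)], Nat.count_succ,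
        hcount i, hpos i]
    rcases hN with hN | ⟨rfl, hobs⟩
    · have : ∀ i, ∃ u p, T.IsTrace u (a i) ∧ u p = b' i ∧
          Nat.count (fun n => ξ i (u n)) p = c := by
        intro i
        by_cases hi : i ∈ N
        · obtain ⟨u, hu, hlast, hc⟩ := extend i hi
          exact ⟨u, pos i + 1, hu, hlast, by simpa [hN i hi] using hc⟩
        · exact ⟨t i, pos i, ht i, by rw [hpos i, hstay i hi], hcount i⟩
      choose u p hu using this
      exact ⟨u, p, c, fun i => (hu i).1, fun i => (hu i).2.1, fun i => (hu i).2.2⟩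
    · choose u hu using fun i => extend i trivial
      refine ⟨u, fun i => pos i + 1, c + 1, fun i => (hu i).1, fun i => (hu i).2.1, fun i => ?_⟩
      simpa [hobs i] using (hu i).2.2

theorem not_badState_of_reachable {ψ : (Fin k → S) → Prop} (hmod : kSafetyModels T ψ ξ φ)
    {sb b : Fin k → S} (hinit : ∀ i, sb i ∈ T.Init) (hψ : ψ sb)
    (hreach : ReflTransGen (ValidStep T ξ) sb b) : ¬ BadState ξ φ b := by
  rintro ⟨hobs, hφ⟩
  apply hφ
  obtain ⟨t, pos, c, ht, hpos, hcount⟩ := exists_synchronized_traces hreach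
  have hξ : ∀ i, ξ i (t i (pos i)) := fun i => (hpos i).symm ▸ hobs i
  have hobsUpTo : ∀ i, HasObsUpTo (ξ i) (t i) c := fun i => hcount i ▸ hasObsUpTo_count (hξ i)
  convert hmod sb hinit hψ t ht c hobsUpTo using 1
  funext i
  rw [← hcount i, obsState_count (hξ i), hpos i]

def IsSafeInvariant (T : LTS S L) (ξ : Fin k → S → Prop) (φ : (Fin k → S) → Prop)
    (G : Set (Fin k → S)) : Prop :=
  ∀ sb ∈ G, ¬ BadState ξ φ sb ∧
    ∃ M : Sched k, ValidSched ξ M.val sb ∧ ∀ ℓ sb', ComposedStep T M.val ℓ sb sb' → sb' ∈ G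

/-- The clauses (KD1)–(KD4). -/
def IsKSafetyEncoding (T : LTS S L) (ψ : (Fin k → S) → Prop) (ξ : Fin k → S → Prop)
    (φ : (Fin k → S) → Prop) (D : Sched k → (Fin k → S) → Prop) : Prop :=
  (∀ sb, (∀ i, sb i ∈ T.Init) → ψ sb → ∃ M, ¬ D M sb) ∧
  (∀ (M : Sched k) sb, BadState ξ φ sb → D M sb) ∧
  (∀ (M : Sched k) sb, ¬ ValidSched ξ M.val sb → D M sb) ∧
  (∀ (M : Sched k) sb sb' ℓ, (∀ M', D M' sb') → ComposedStep T M.val ℓ sb sb' → D M sb)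

theorem exists_kSafetyEncoding_iff (ψ : (Fin k → S) → Prop) :
    (∃ D, IsKSafetyEncoding T ψ ξ φ D) ↔
      ∃ G, (∀ sb, (∀ i, sb i ∈ T.Init) → ψ sb → sb ∈ G) ∧ IsSafeInvariant T ξ φ G := by
  constructor
  · rintro ⟨D, hKD1, hKD2, hKD3, hKD4⟩
    refine ⟨{sb | ∃ M, ¬ D M sb}, hKD1, fun sb ⟨M, hM⟩ => ⟨fun hbad => hM (hKD2 M sb hbad),
      M, not_imp_comm.1 (hKD3 M sb) hM, fun ℓ sb' hstep => ?_⟩⟩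
    by_contra hsucc
    exact hM (hKD4 M sb sb' ℓ (fun M' => not_not.1 fun h => hsucc ⟨M', h⟩) hstep)
  · rintro ⟨G, hinit, hG⟩
    refine ⟨fun M sb => ¬ (sb ∈ G ∧ ValidSched ξ M.val sb ∧
      ∀ ℓ sb', ComposedStep T M.val ℓ sb sb' → sb' ∈ G), fun sb hI hψ => ?_,
      fun M sb hbad hM => (hG sb hM.1).1 hbad, fun M sb hnv hM => hnv hM.2.1,
      fun M sb sb' ℓ hall hstep hM => ?_⟩
    · obtain ⟨-, M, hM⟩ := hG sb (hinit sb hI hψ)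
      exact ⟨M, not_not.2 ⟨hinit sb hI hψ, hM⟩⟩
    · have hmem := hM.2.2 ℓ sb' hstep
      obtain ⟨-, M', hM'⟩ := hG sb' hmem
      exact hall M' ⟨hmem, hM'⟩

section Invariant

variable {G : Set (Fin k → S)} {t : Fin k → ℕ → S}

theorem obsState_mem_of_count_eq (hG : IsSafeInvariant T ξ φ G)
    (ht : ∀ i n, ∃ ℓ, T.Tr (t i n) ℓ (t i (n + 1))) {c : ℕ}
    (hobs : ∀ i, HasObsUpTo (ξ i) (t i) c) {nb : Fin k → ℕ} (hmem : (fun i => t i (nb i)) ∈ G)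
    (hcount : ∀ i, Nat.count (fun n => ξ i (t i n)) (nb i) = c) :
    (fun i => obsState (ξ i) (t i) c) ∈ G := by
  set e : Fin k → ℕ := fun i => Nat.nth (fun n => ξ i (t i n)) c
  have he : ∀ i, ξ i (t i (e i)) := fun i => Nat.nth_mem c (hasObsUpTo_iff.1 (hobs i))
  induction hsum : ∑ i, (e i - nb i) using Nat.strong_induction_on generalizing nb with
  | _ n ih =>
  have hle : ∀ i, nb i ≤ e i := fun i =>
    le_nth_of_count_eq (hasObsUpTo_iff.1 (hobs i)) (hcount i)
  by_cases hall : ∀ i, ξ i (t i (nb i))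
  · have : nb = e := funext fun i => eq_nth_of_count_eq (hcount i) (hall i)
    rw [this] at hmem
    exact hmem
  obtain ⟨-, M, hvalid, hsucc⟩ := hG _ hmem
  have hM : ∀ i ∈ M.val, ¬ ξ i (t i (nb i)) := hvalid.resolve_right fun h => hall h.2
  have hlt : ∀ i ∈ M.val, nb i < e i := fun i hi =>
    lt_of_le_of_ne (hle i) fun h => hM i hi (h ▸ he i)
  set nb' : Fin k → ℕ := fun i => if i ∈ M.val then nb i + 1 else nb i
  obtain ⟨ℓ, hstep⟩ := composedStep_of_traces ht (nb' := nb') (fun i hi => if_pos hi)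
    fun i hi => if_neg hi
  refine ih _ ?_ (hsucc ℓ _ hstep) (fun i => ?_) rfl
  · obtain ⟨i₀, hi₀⟩ := M.2
    refine hsum ▸ Finset.sum_lt_sum (fun i _ => ?_) ⟨i₀, Finset.mem_univ _, ?_⟩
    · by_cases hi : i ∈ M.val <;> simp only [nb', hi, if_true, if_false] <;> omega
    · simp only [nb', hi₀, if_true]
      have := hlt i₀ hi₀
      omega
  · by_cases hi : i ∈ M.val
    · simp only [nb', hi, if_true, Nat.count_succ, hM i hi, if_false, hcount i, add_zero]
    · simp only [nb', hi, if_false, hcount i]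

theorem exists_synchronized_mem (hG : IsSafeInvariant T ξ φ G) {sb : Fin k → S}
    (hsb : sb ∈ G) (ht : ∀ i, T.IsTrace (t i) (sb i)) {j : ℕ}
    (hobs : ∀ i, HasObsUpTo (ξ i) (t i) j) :
    ∀ c ≤ j, ∃ nb : Fin k → ℕ, (fun i => t i (nb i)) ∈ G ∧
      ∀ i, Nat.count (fun n => ξ i (t i n)) (nb i) = c := by
  intro c hc
  induction c with
  | zero => exact ⟨0, by simpa [fun i => (ht i).1] using hsb, fun i => Nat.count_zero _⟩
  | succ c ih =>
    obtain ⟨nb, hmem, hcount⟩ := ih (by omega)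
    have hobs_c : ∀ i, ∀ hf : (Set.ofPred fun n => ξ i (t i n)).Finite, c < hf.toFinset.card :=
      fun i hf => lt_of_le_of_lt (by omega) (hasObsUpTo_iff.1 (hobs i) hf)
    have hmem_c := obsState_mem_of_count_eq hG (fun i => (ht i).2)
      (fun i => hasObsUpTo_iff.2 (hobs_c i)) hmem hcount
    obtain ⟨-, M, hvalid, hsucc⟩ := hG _ hmem_c
    have hM : M.val = Set.univ := by
      rcases hvalid with hnone | ⟨hM, -⟩
      · obtain ⟨i, hi⟩ := M.2
        exact absurd (Nat.nth_mem c (hobs_c i)) (hnone i hi)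
      · exact hM
    obtain ⟨ℓ, hstep⟩ := composedStep_of_traces (fun i => (ht i).2) (M := M.val)
      (nb := fun i => Nat.nth (fun n => ξ i (t i n)) c) (nb' := fun i => _ + 1)
      (fun i _ => rfl) fun i hi => absurd (hM ▸ Set.mem_univ i) hi
    exact ⟨_, hsucc ℓ _ hstep, fun i => Nat.count_nth_succ (hobs_c i)⟩

theorem kSafetyModels_of_isSafeInvariant {ψ : (Fin k → S) → Prop}
    (hG : IsSafeInvariant T ξ φ G) (hinit : ∀ sb, (∀ i, sb i ∈ T.Init) → ψ sb → sb ∈ G) :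
    kSafetyModels T ψ ξ φ := by
  intro sb hI hψ t ht j hobs
  obtain ⟨nb, hmem, hcount⟩ := exists_synchronized_mem hG (hinit sb hI hψ) ht hobs j le_rfl
  have hmem_j := obsState_mem_of_count_eq hG (fun i => (ht i).2) hobs hmem hcount
  by_contra hφ
  exact (hG _ hmem_j).1 ⟨fun i => Nat.nth_mem j (hasObsUpTo_iff.1 (hobs i)), hφ⟩

end Invariant

theorem kSafetyModels_iff_exists_isSafeInvariant (hk : 1 ≤ k) (ψ : (Fin k → S) → Prop) :
    kSafetyModels T ψ ξ φ ↔
      ∃ G, (∀ sb, (∀ i, sb i ∈ T.Init) → ψ sb → sb ∈ G) ∧ IsSafeInvariant T ξ φ G := by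
  refine ⟨fun hmod => ⟨{sb | ∀ b, ReflTransGen (ValidStep T ξ) sb b → ¬ BadState ξ φ b},
    fun sb hI hψ b => not_badState_of_reachable hmod hI hψ, fun sb hsafe => ?_⟩,
    fun ⟨G, hinit, hG⟩ => kSafetyModels_of_isSafeInvariant hG hinit⟩
  obtain ⟨M, hvalid⟩ := exists_validSched hk sb
  exact ⟨hsafe sb ReflTransGen.refl, M, hvalid, fun ℓ sb' hstep b hreach =>
    hsafe b (ReflTransGen.head ⟨M.val, hvalid, ℓ, hstep⟩ hreach)⟩

end Encoding

theorem kSafety_chc_encoding {S L : Type*} (T : LTS S L) {k : ℕ} (hk : 1 ≤ k)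
    (ψ : (Fin k → S) → Prop) (ξ : Fin k → S → Prop) (φ : (Fin k → S) → Prop) :
    (∃ D : Sched k → (Fin k → S) → Prop,
      (∀ sb, (∀ i, sb i ∈ T.Init) → ψ sb → ∃ M, ¬ D M sb) ∧
      (∀ (M : Sched k) sb, BadState ξ φ sb → D M sb) ∧
      (∀ (M : Sched k) sb, ¬ ValidSched ξ M.val sb → D M sb) ∧
      (∀ (M : Sched k) sb sb' ℓ, (∀ M', D M' sb') →
        ComposedStep T M.val ℓ sb sb' → D M sb)) ↔
    kSafetyModels T ψ ξ φ :=
  (exists_kSafetyEncoding_iff ψ).trans (kSafetyModels_iff_exists_isSafeInvariant hk ψ).symm
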